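/- (Lemma relating V and 𝒱) Let G be a connected graph on n ≥ 2 vertices, V(x) = (1/2)Σ_{(i,j)∈E}(x_i-x_j)², and 𝒱(x) = max_i x_i - min_i x_i. For any x̂, x̄ ∈ ℝ^n and any 0 < γ < 1: if V(x̄) ≤ 4γ²·V(x̂)/(n²(n-1)) then 𝒱(x̄) ≤ γ·𝒱(x̂). -/

import Mathlib

/-!
Write `V(x) = ½ ∑_{ij ∈ E} (x_i - x_j)²` and `𝒱(x) = max x - min x`. Along a path from an argmax to
an argmin of `x`, which has at most `n - 1` edges, the increments telescope to `𝒱(x)`, so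
Cauchy–Schwarz gives `𝒱(x)² ≤ 2(n - 1) V(x)`. In the other direction `V(x)` is at most its value
on the complete graph, `½ (n ∑ yᵢ² - (∑ yᵢ)²) ≤ ½ n ∑ yᵢ²` for `y = x - (max x + min x)/2`, and
`|yᵢ| ≤ 𝒱(x)/2`, so `V(x) ≤ n² 𝒱(x)² / 8`. Chaining the two bounds through the hypothesis gives
`𝒱(x̄)² ≤ γ² 𝒱(x̂)²`.
-/

open Finset

section Spread

variable {ι : Type*} [Fintype ι]

theorem sum_sum_sq_sub_eq (x : ι → ℝ) (c : ℝ) :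
    ∑ i, ∑ j, (x i - x j) ^ 2 =
      2 * Fintype.card ι * ∑ i, (x i - c) ^ 2 - 2 * (∑ i, (x i - c)) ^ 2 := by
  have hshift : ∀ i j, (x i - x j) ^ 2 =
      (x i - c) ^ 2 + (x j - c) ^ 2 - 2 * ((x i - c) * (x j - c)) := fun i j => by ring
  simp only [hshift, sum_add_distrib, sum_sub_distrib, sum_const, card_univ, nsmul_eq_mul,
    ← mul_sum, ← sum_mul]
  ring

theorem sum_sum_sq_sub_le {x : ι → ℝ} {m M : ℝ} (hx : ∀ i, m ≤ x i ∧ x i ≤ M) :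
    ∑ i, ∑ j, (x i - x j) ^ 2 ≤ Fintype.card ι ^ 2 * (M - m) ^ 2 / 2 := by
  have hdev : ∀ i, (x i - (M + m) / 2) ^ 2 ≤ ((M - m) / 2) ^ 2 := fun i =>
    sq_le_sq' (by linarith [hx i]) (by linarith [hx i])
  have hsum : ∑ i, (x i - (M + m) / 2) ^ 2 ≤ Fintype.card ι * ((M - m) / 2) ^ 2 := by
    simpa using sum_le_sum fun i (_ : i ∈ univ) => hdev i
  rw [sum_sum_sq_sub_eq x ((M + m) / 2)]
  nlinarith [sq_nonneg (∑ i, (x i - (M + m) / 2)), Nat.cast_nonneg (α := ℝ) (Fintype.card ι)]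

variable [Nonempty ι]

noncomputable def spread (x : ι → ℝ) : ℝ :=
  univ.sup' univ_nonempty x - univ.inf' univ_nonempty x

theorem spread_nonneg (x : ι → ℝ) : 0 ≤ spread x :=
  sub_nonneg.2 <| (inf'_le x (mem_univ (Classical.arbitrary ι))).trans (le_sup' x (mem_univ _))

end Spread

section Sym2

variable {V : Type*}

def sqDiff (x : V → ℝ) : Sym2 V → ℝ :=
  Sym2.lift ⟨fun i j => (x i - x j) ^ 2, fun _ _ => by ring⟩

def absDiff (x : V → ℝ) : Sym2 V → ℝ :=
  Sym2.lift ⟨fun i j => |x i - x j|, fun _ _ => abs_sub_comm _ _⟩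

@[simp]
theorem sqDiff_mk (x : V → ℝ) (i j : V) : sqDiff x s(i, j) = (x i - x j) ^ 2 := rfl

@[simp]
theorem absDiff_mk (x : V → ℝ) (i j : V) : absDiff x s(i, j) = |x i - x j| := rfl

theorem absDiff_sq (x : V → ℝ) (e : Sym2 V) : absDiff x e ^ 2 = sqDiff x e := by
  induction e using Sym2.inductionOn with
  | hf i j => simp

theorem sqDiff_nonneg (x : V → ℝ) (e : Sym2 V) : 0 ≤ sqDiff x e := by
  rw [← absDiff_sq]; positivity

end Sym2

namespace SimpleGraph

variable {V : Type*} {G : SimpleGraph V}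

theorem Walk.abs_sub_le_sum_absDiff (x : V → ℝ) {u v : V} (w : G.Walk u v) :
    |x u - x v| ≤ (w.edges.map (absDiff x)).sum := by
  induction w with
  | nil => simp
  | cons _ p ih =>
    rw [Walk.edges_cons, List.map_cons, List.sum_cons, absDiff_mk]
    exact (abs_sub_le _ _ _).trans (add_le_add_right ih _)

variable [Fintype V] [DecidableRel G.Adj]

variable (G) in
noncomputable def dirichletEnergy (x : V → ℝ) : ℝ :=
  (1 / 2) * ∑ e ∈ G.edgeFinset, sqDiff x e

theorem Walk.IsPath.sq_sub_le (x : V → ℝ) {u v : V} {p : G.Walk u v} (hp : p.IsPath) :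
    (x u - x v) ^ 2 ≤ (Fintype.card V - 1) * ∑ e ∈ G.edgeFinset, sqDiff x e := by
  classical
  set s := p.edges.toFinset
  have hcard : (#s : ℝ) ≤ Fintype.card V - 1 := by
    have : #s + 1 ≤ Fintype.card V := by
      rw [List.toFinset_card_of_nodup hp.isTrail.edges_nodup, Walk.length_edges]
      exact hp.length_lt
    rw [le_sub_iff_add_le]; exact_mod_cast this
  have htel : |x u - x v| ≤ ∑ e ∈ s, absDiff x e := by
    rw [List.sum_toFinset _ hp.isTrail.edges_nodup]
    exact p.abs_sub_le_sum_absDiff x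
  have hsub : s ⊆ G.edgeFinset := fun e he =>
    mem_edgeFinset.2 (p.edges_subset_edgeSet (List.mem_toFinset.1 he))
  calc (x u - x v) ^ 2 = |x u - x v| ^ 2 := (sq_abs _).symm
    _ ≤ (∑ e ∈ s, absDiff x e) ^ 2 := pow_le_pow_left₀ (abs_nonneg _) htel 2
    _ ≤ #s * ∑ e ∈ s, sqDiff x e := by
      simpa only [absDiff_sq] using sq_sum_le_card_mul_sum_sq (s := s) (f := absDiff x)
    _ ≤ (Fintype.card V - 1) * ∑ e ∈ G.edgeFinset, sqDiff x e :=
      mul_le_mul hcard (sum_le_sum_of_subset_of_nonneg hsub fun e _ _ => sqDiff_nonneg x e)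
        (sum_nonneg fun e _ => sqDiff_nonneg x e) ((Nat.cast_nonneg _).trans hcard)

theorem Connected.spread_sq_le [Nonempty V] (hG : G.Connected) (x : V → ℝ) :
    spread x ^ 2 ≤ 2 * (Fintype.card V - 1) * G.dirichletEnergy x := by
  classical
  obtain ⟨a, -, ha⟩ := exists_mem_eq_sup' univ_nonempty x
  obtain ⟨b, -, hb⟩ := exists_mem_eq_inf' univ_nonempty x
  obtain ⟨p⟩ := hG.preconnected a b
  have := p.toPath.2.sq_sub_le x
  rw [spread, ha, hb, dirichletEnergy]
  linarith

theorem sum_darts_eq_two_nsmul {M : Type*} [AddCommMonoid M] (f : Sym2 V → M) :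
    ∑ d : G.Dart, f d.edge = 2 • ∑ e ∈ G.edgeFinset, f e := by
  classical
  rw [← sum_fiberwise_of_maps_to (g := Dart.edge) (t := G.edgeFinset)
    (fun d _ => mem_edgeFinset.2 d.edge_mem), smul_sum]
  refine sum_congr rfl fun e he => ?_
  rw [sum_congr rfl fun d hd => congrArg f (mem_filter.1 hd).2, sum_const,
    G.dart_edge_fiber_card e (mem_edgeFinset.1 he)]

theorem sum_darts_le_sum_sum {f : V → V → ℝ} (hf : ∀ i j, 0 ≤ f i j) :
    ∑ d : G.Dart, f d.fst d.snd ≤ ∑ i, ∑ j, f i j := by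
  calc ∑ d : G.Dart, f d.fst d.snd
        = ∑ p ∈ univ.map ⟨Dart.toProd, Dart.toProd_injective⟩, f p.1 p.2 := by
          rw [sum_map]; rfl
    _ ≤ ∑ p : V × V, f p.1 p.2 :=
      sum_le_sum_of_subset_of_nonneg (subset_univ _) fun p _ _ => hf _ _
    _ = ∑ i, ∑ j, f i j := Fintype.sum_prod_type _

theorem dirichletEnergy_le_spread_sq [Nonempty V] (x : V → ℝ) :
    G.dirichletEnergy x ≤ Fintype.card V ^ 2 * spread x ^ 2 / 8 := by
  have hdarts : 2 * ∑ e ∈ G.edgeFinset, sqDiff x e ≤ ∑ i, ∑ j, (x i - x j) ^ 2 :=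
    calc 2 * ∑ e ∈ G.edgeFinset, sqDiff x e = ∑ d : G.Dart, sqDiff x d.edge := by
          rw [sum_darts_eq_two_nsmul, two_nsmul, two_mul]
      _ ≤ ∑ i, ∑ j, (x i - x j) ^ 2 := sum_darts_le_sum_sum fun i j => sq_nonneg (x i - x j)
  have hbox : ∑ i, ∑ j, (x i - x j) ^ 2 ≤
      Fintype.card V ^ 2 * (univ.sup' univ_nonempty x - univ.inf' univ_nonempty x) ^ 2 / 2 :=
    sum_sum_sq_sub_le fun i => ⟨inf'_le x (mem_univ i), le_sup' x (mem_univ i)⟩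
  rw [dirichletEnergy, spread]
  linarith

end SimpleGraph

/-- if V(x̄) ≤ 4γ²·V(x̂)/(n²(n-1)) then 𝒱(x̄) ≤ γ·𝒱(x̂), for a connected
graph on n ≥ 2 vertices and 0 < γ < 1. -/
theorem V_calV_relation
    (n : ℕ) (hn : 2 ≤ n) (G : SimpleGraph (Fin n)) [DecidableRel G.Adj]
    (hconn : G.Connected) (γ : ℝ) (hγ0 : 0 < γ)
    (xhat xbar : Fin n → ℝ)
    (hV : (1 / 2) * ∑ e ∈ G.edgeFinset,
            Sym2.lift ⟨fun i j => (xbar i - xbar j) ^ 2, fun i j => by ring⟩ e ≤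
          4 * γ ^ 2 *
            ((1 / 2) * ∑ e ∈ G.edgeFinset,
              Sym2.lift ⟨fun i j => (xhat i - xhat j) ^ 2, fun i j => by ring⟩ e) /
            ((n : ℝ) ^ 2 * ((n : ℝ) - 1))) :
    Finset.univ.sup' ⟨⟨0, by omega⟩, Finset.mem_univ _⟩ xbar -
        Finset.univ.inf' ⟨⟨0, by omega⟩, Finset.mem_univ _⟩ xbar ≤
      γ * (Finset.univ.sup' ⟨⟨0, by omega⟩, Finset.mem_univ _⟩ xhat -
           Finset.univ.inf' ⟨⟨0, by omega⟩, Finset.mem_univ _⟩ xhat) := by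
  have : Nonempty (Fin n) := ⟨⟨0, by omega⟩⟩
  change G.dirichletEnergy xbar ≤ 4 * γ ^ 2 * G.dirichletEnergy xhat / (n ^ 2 * (n - 1)) at hV
  change spread xbar ≤ γ * spread xhat
  have hlower := hconn.spread_sq_le xbar
  have hupper := G.dirichletEnergy_le_spread_sq xhat
  rw [Fintype.card_fin] at hlower hupper
  have hn' : (2 : ℝ) ≤ n := by exact_mod_cast hn
  rw [le_div_iff₀ (by nlinarith)] at hV
  have hsq : (n : ℝ) ^ 2 * spread xbar ^ 2 ≤ n ^ 2 * (γ * spread xhat) ^ 2 :=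
    calc (n : ℝ) ^ 2 * spread xbar ^ 2
        ≤ n ^ 2 * (2 * (n - 1) * G.dirichletEnergy xbar) := by gcongr
      _ = 2 * (G.dirichletEnergy xbar * (n ^ 2 * (n - 1))) := by ring
      _ ≤ 8 * γ ^ 2 * G.dirichletEnergy xhat := by linarith
      _ ≤ 8 * γ ^ 2 * (n ^ 2 * spread xhat ^ 2 / 8) := by gcongr
      _ = n ^ 2 * (γ * spread xhat) ^ 2 := by ring
  exact (pow_le_pow_iff_left₀ (spread_nonneg _) (mul_nonneg hγ0.le (spread_nonneg _))
    two_ne_zero).1 (le_of_mul_le_mul_left hsq (by positivity))
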